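/- Let q ≥ 0 and let 0 < ρ₋ ≤ ρ₊, u₊ ≥ 0, 0 < λ₋ ≤ λ₊ be given. Then there exists a constant C > 0, depending only on q, ρ₋, ρ₊, u₊, λ₋, λ₊, with the following property. For i = 1, 2, let ρᵢ ∈ [ρ₋, ρ₊], Uᵢ ∈ ℝ³ with |Uᵢ| ≤ u₊, and 𝒯ᵢ a real symmetric 3×3 matrix with λ₋|k|² ≤ kᵀ𝒯ᵢk ≤ λ₊|k|² for all k ∈ ℝ³, and define the ellipsoidal Gaussians Mᵢ(v) = ρᵢ/√(det(2π𝒯ᵢ)) · exp(−½(v−Uᵢ)ᵀ𝒯ᵢ⁻¹(v−Uᵢ)). Then sup_{v∈ℝ³} (1+|v|)^q |M₁(v) − M₂(v)| ≤ C·(|ρ₁ − ρ₂| + |U₁ − U₂| + ‖𝒯₁ − 𝒯₂‖), where ‖·‖ is the entrywise maximum norm (or any fixed norm) on 3×3 matrices. -/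

import Mathlib

noncomputable section

open Real MeasureTheory

/-- Velocity space `ℝ³`. -/
abbrev V3 := Fin 3 → ℝ

/-- Velocity grid index set `ℤ³`. -/
abbrev Idx3 := Fin 3 → ℤ

/-- Euclidean norm on `V3`. -/
def enorm3 (v : V3) : ℝ := Real.sqrt (∑ a, v a ^ 2)

/-- The velocity grid node `v_j = jΔv`. -/
def gridV (Δv : ℝ) (j : Idx3) : V3 := fun a => (j a : ℝ) * Δv

/-- Quadratic form `kᵀ A k` of a 3×3 matrix. -/
def quadForm (A : Matrix (Fin 3) (Fin 3) ℝ) (k : V3) : ℝ := ∑ a, ∑ b, k a * A a b * k b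

/-- The ellipsoidal Gaussian with density `ρ`, bulk velocity `U` and temperature tensor `T`. -/
def gaussianM (ρ : ℝ) (U : V3) (T : Matrix (Fin 3) (Fin 3) ℝ) (v : V3) : ℝ :=
  ρ / Real.sqrt ((2 * π) ^ 3 * T.det) *
    Real.exp (-(1 / 2) * quadForm T⁻¹ (fun a => v a - U a))

/-- Discrete density. -/
def dRho (Δv : ℝ) (h : Idx3 → ℝ) : ℝ := ∑' j : Idx3, h j * Δv ^ 3

/-- Discrete bulk velocity. -/
def dU (Δv : ℝ) (h : Idx3 → ℝ) : V3 :=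
  fun a => (dRho Δv h)⁻¹ * ∑' j : Idx3, h j * gridV Δv j a * Δv ^ 3

/-- Discrete temperature. -/
def dT (Δv : ℝ) (h : Idx3 → ℝ) : ℝ :=
  (3 * dRho Δv h)⁻¹ * ∑' j : Idx3, h j * enorm3 (fun a => gridV Δv j a - dU Δv h a) ^ 2 * Δv ^ 3

/-- Discrete stress tensor. -/
def dTheta (Δv : ℝ) (h : Idx3 → ℝ) : Matrix (Fin 3) (Fin 3) ℝ :=
  Matrix.of fun a b =>
    (dRho Δv h)⁻¹ *
      ∑' j : Idx3, h j * (gridV Δv j a - dU Δv h a) * (gridV Δv j b - dU Δv h b) * Δv ^ 3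

/-- The temperature tensor `(1−ν)T·Id + νΘ`. -/
def tensorOf (ν T : ℝ) (Θ : Matrix (Fin 3) (Fin 3) ℝ) : Matrix (Fin 3) (Fin 3) ℝ :=
  ((1 - ν) * T) • (1 : Matrix (Fin 3) (Fin 3) ℝ) + ν • Θ

/-- Continuous density. -/
def cRho (F : V3 → ℝ) : ℝ := ∫ v : V3, F v

/-- Continuous bulk velocity. -/
def cU (F : V3 → ℝ) : V3 := fun a => (cRho F)⁻¹ * ∫ v : V3, F v * v a

/-- Continuous temperature. -/
def cT (F : V3 → ℝ) : ℝ :=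
  (3 * cRho F)⁻¹ * ∫ v : V3, F v * enorm3 (fun a => v a - cU F a) ^ 2

/-- Continuous stress tensor. -/
def cTheta (F : V3 → ℝ) : Matrix (Fin 3) (Fin 3) ℝ :=
  Matrix.of fun a b => (cRho F)⁻¹ * ∫ v : V3, F v * (v a - cU F a) * (v b - cU F b)

/-- Collision frequency `A_ν = (1−ν)⁻¹`. -/
def Anu (ν : ℝ) : ℝ := (1 - ν)⁻¹

/-- The modified relaxation parameter `nt = κν/(κ+Δt)`. -/
def nuTilde (κ ν Δt : ℝ) : ℝ := κ * ν / (κ + Δt)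

/-- `s(i,j)`: the unique integer with `sΔx ≤ iΔx − Δt v_{j,1} < (s+1)Δx`. -/
def sIdx (Δx Δt Δv : ℝ) (i : ℤ) (j : Idx3) : ℤ :=
  ⌊((i : ℝ) * Δx - Δt * ((j 0 : ℝ) * Δv)) / Δx⌋

/-- Linear reconstruction of a grid function at the foot of the characteristic. -/
def recon (Δx Δt Δv : ℝ) (g : ℤ → Idx3 → ℝ) (i : ℤ) (j : Idx3) : ℝ :=
  (((i : ℝ) * Δx - Δt * ((j 0 : ℝ) * Δv) - (sIdx Δx Δt Δv i j : ℝ) * Δx) / Δx) *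
      g (sIdx Δx Δt Δv i j + 1) j
    + ((((sIdx Δx Δt Δv i j : ℝ) + 1) * Δx - ((i : ℝ) * Δx - Δt * ((j 0 : ℝ) * Δv))) / Δx) *
      g (sIdx Δx Δt Δv i j) j

/-- Discrete ellipsoidal Gaussian built from a velocity grid function `h`. -/
def gaussD (nt Δv : ℝ) (h : Idx3 → ℝ) (j : Idx3) : ℝ :=
  gaussianM (dRho Δv h) (dU Δv h) (tensorOf nt (dT Δv h) (dTheta Δv h)) (gridV Δv j)

/-- The shifted initial datum `v ↦ f₀(x_i − Δt v₁, v)`. -/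
def shift0 (f₀ : ℝ → V3 → ℝ) (Δx Δt : ℝ) (i : ℤ) : V3 → ℝ :=
  fun v => f₀ ((i : ℝ) * Δx - Δt * v 0) v

/-- Step-0 ellipsoidal Gaussian, built from the continuous macroscopic fields of `f̃⁰`. -/
def gauss0 (f₀ : ℝ → V3 → ℝ) (κ ν Δx Δt Δv : ℝ) (i : ℤ) (j : Idx3) : ℝ :=
  gaussianM (cRho (shift0 f₀ Δx Δt i)) (cU (shift0 f₀ Δx Δt i))
    (tensorOf (nuTilde κ ν Δt) (cT (shift0 f₀ Δx Δt i)) (cTheta (shift0 f₀ Δx Δt i)))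
    (gridV Δv j)

/-- `f̃⁰_{i,j} = f₀(x_i − Δt v_{j,1}, v_j)`. -/
def tilde0 (f₀ : ℝ → V3 → ℝ) (Δx Δt Δv : ℝ) (i : ℤ) (j : Idx3) : ℝ :=
  f₀ ((i : ℝ) * Δx - Δt * ((j 0 : ℝ) * Δv)) (gridV Δv j)

/-- The semi-Lagrangian scheme iterates `fⁿ_{i,j}`. -/
def schemeF (f₀ : ℝ → V3 → ℝ) (κ ν Δx Δt Δv : ℝ) : ℕ → ℤ → Idx3 → ℝ
  | 0 => fun i j => f₀ ((i : ℝ) * Δx) (gridV Δv j)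
  | 1 => fun i j =>
      (κ / (κ + Anu ν * Δt)) * tilde0 f₀ Δx Δt Δv i j
        + (Anu ν * Δt / (κ + Anu ν * Δt)) * gauss0 f₀ κ ν Δx Δt Δv i j
  | (n + 2) => fun i j =>
      (κ / (κ + Anu ν * Δt)) * recon Δx Δt Δv (schemeF f₀ κ ν Δx Δt Δv (n + 1)) i j
        + (Anu ν * Δt / (κ + Anu ν * Δt)) *
            gaussD (nuTilde κ ν Δt) Δv (recon Δx Δt Δv (schemeF f₀ κ ν Δx Δt Δv (n + 1)) i) j

/-- The reconstructed scheme iterates `f̃ⁿ_{i,j}`. -/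
def schemeTilde (f₀ : ℝ → V3 → ℝ) (κ ν Δx Δt Δv : ℝ) : ℕ → ℤ → Idx3 → ℝ
  | 0 => tilde0 f₀ Δx Δt Δv
  | (n + 1) => recon Δx Δt Δv (schemeF f₀ κ ν Δx Δt Δv (n + 1))

/-- The ellipsoidal Gaussian used in the `n → n+1` update of the scheme. -/
def schemeGauss (f₀ : ℝ → V3 → ℝ) (κ ν Δx Δt Δv : ℝ) : ℕ → ℤ → Idx3 → ℝ
  | 0 => gauss0 f₀ κ ν Δx Δt Δv
  | (n + 1) => fun i j =>
      gaussD (nuTilde κ ν Δt) Δv (schemeTilde f₀ κ ν Δx Δt Δv (n + 1) i) j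

/-- Discrete density of `f̃ⁿ` at spatial node `i` (continuous fields at step 0). -/
def schemeRho (f₀ : ℝ → V3 → ℝ) (κ ν Δx Δt Δv : ℝ) : ℕ → ℤ → ℝ
  | 0 => fun i => cRho (shift0 f₀ Δx Δt i)
  | (n + 1) => fun i => dRho Δv (schemeTilde f₀ κ ν Δx Δt Δv (n + 1) i)

/-- Discrete bulk velocity of `f̃ⁿ` at spatial node `i` (continuous fields at step 0). -/
def schemeU (f₀ : ℝ → V3 → ℝ) (κ ν Δx Δt Δv : ℝ) : ℕ → ℤ → V3
  | 0 => fun i => cU (shift0 f₀ Δx Δt i)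
  | (n + 1) => fun i => dU Δv (schemeTilde f₀ κ ν Δx Δt Δv (n + 1) i)

/-- Discrete temperature of `f̃ⁿ` at spatial node `i` (continuous fields at step 0). -/
def schemeTemp (f₀ : ℝ → V3 → ℝ) (κ ν Δx Δt Δv : ℝ) : ℕ → ℤ → ℝ
  | 0 => fun i => cT (shift0 f₀ Δx Δt i)
  | (n + 1) => fun i => dT Δv (schemeTilde f₀ κ ν Δx Δt Δv (n + 1) i)

/-- Weighted `L∞_q` norm of the initial datum. -/
def normLq (q : ℝ) (f₀ : ℝ → V3 → ℝ) : ℝ :=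
  ⨆ x : ℝ, ⨆ v : V3, |f₀ x v| * (1 + enorm3 v) ^ q

/-!
Write `M = a · exp (-Q / 2)` with `a = ρ / √det(2π𝒯)` and `Q = (v - U)ᵀ 𝒯⁻¹ (v - U)`.
The spectral bounds put the eigenvalues of `𝒯` in `[λ₋, λ₊]`, so `det 𝒯 ≥ λ₋³`, the entries
of `𝒯` are bounded by `λ₊`, `|𝒯⁻¹ k| ≤ |k| / λ₋` and `Q ≥ |v - U|² / λ₊`. Hence `a` is
Lipschitz in `(ρ, 𝒯)` (the determinant is Lipschitz on bounded matrices), and with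
`r = min |v - Uᵢ|` the difference `Q₁ - Q₂` is at most `(1 + r)²` times the distance of the
parameters, while `|e^{-Q₁/2} - e^{-Q₂/2}| ≤ e^{-r²/(2λ₊)} |Q₁ - Q₂| / 2`. The Gaussian factor
absorbs both `(1 + r)²` and the weight `(1 + |v|)^q ≤ e^{q (r + u₊)}`, because
`(q + 2) r - r² / (2λ₊)` is bounded above.
-/

open Matrix

section QuadraticForm

variable {n : Type*} [Fintype n] {T : Matrix n n ℝ} {c C : ℝ}

lemma sq_dotProduct_le (x y : n → ℝ) : (x ⬝ᵥ y) ^ 2 ≤ (x ⬝ᵥ x) * (y ⬝ᵥ y) := by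
  simpa only [dotProduct, sq] using Finset.sum_mul_sq_le_sq_mul_sq Finset.univ x y

lemma Matrix.IsHermitian.le_eigenvalues [DecidableEq n] (hT : T.IsHermitian)
    (hlow : ∀ x, c * (x ⬝ᵥ x) ≤ x ⬝ᵥ T *ᵥ x) (i : n) : c ≤ hT.eigenvalues i := by
  set v := hT.eigenvectorBasis i
  have hv : v.ofLp ⬝ᵥ v.ofLp = 1 := by
    have h := real_inner_self_eq_norm_sq v
    rw [hT.eigenvectorBasis.orthonormal.1 i, EuclideanSpace.inner_eq_star_dotProduct] at h
    simpa using h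
  simpa [hv, hT.eigenvalues_eq i, v] using hlow v.ofLp

lemma Matrix.IsHermitian.pow_card_le_det [DecidableEq n] (hT : T.IsHermitian) (hc : 0 ≤ c)
    (hlow : ∀ x, c * (x ⬝ᵥ x) ≤ x ⬝ᵥ T *ᵥ x) : c ^ Fintype.card n ≤ T.det := by
  rw [hT.det_eq_prod_eigenvalues, ← Finset.card_univ, ← Finset.prod_const]
  exact Finset.prod_le_prod (fun _ _ => hc) fun i _ => by simpa using hT.le_eigenvalues hlow i

lemma Matrix.sq_mul_dotProduct_le_mulVec_dotProduct_mulVec (hc : 0 ≤ c)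
    (hlow : ∀ x, c * (x ⬝ᵥ x) ≤ x ⬝ᵥ T *ᵥ x) (x : n → ℝ) :
    c ^ 2 * (x ⬝ᵥ x) ≤ T *ᵥ x ⬝ᵥ T *ᵥ x := by
  have hxx : 0 ≤ x ⬝ᵥ x := dotProduct_self_star_nonneg x
  rcases hxx.eq_or_lt with h | h
  · rw [← h, mul_zero]
    exact dotProduct_self_star_nonneg _
  · refine le_of_mul_le_mul_left ?_ h
    calc x ⬝ᵥ x * (c ^ 2 * (x ⬝ᵥ x)) = (c * (x ⬝ᵥ x)) ^ 2 := by ring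
      _ ≤ (x ⬝ᵥ T *ᵥ x) ^ 2 := pow_le_pow_left₀ (by positivity) (hlow x) 2
      _ ≤ x ⬝ᵥ x * (T *ᵥ x ⬝ᵥ T *ᵥ x) := sq_dotProduct_le x _

lemma Matrix.dotProduct_le_mul_dotProduct_inv_mulVec [DecidableEq n] (hT : T.IsSymm)
    (hdet : IsUnit T.det) (h0 : ∀ x, 0 ≤ x ⬝ᵥ T *ᵥ x)
    (hup : ∀ x, x ⬝ᵥ T *ᵥ x ≤ C * (x ⬝ᵥ x)) (hC : 0 < C) (y : n → ℝ) :
    y ⬝ᵥ y ≤ C * (y ⬝ᵥ T⁻¹ *ᵥ y) := by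
  set x := T⁻¹ *ᵥ y
  have hTx : T *ᵥ x = y := by simp [x, mulVec_mulVec, mul_nonsing_inv _ hdet]
  have hxTy : x ⬝ᵥ T *ᵥ y = y ⬝ᵥ y := by
    rw [dotProduct_mulVec, ← mulVec_transpose, hT.eq, hTx]
  -- expand `0 ≤ (C x - y)ᵀ T (C x - y)` using `T x = y`
  have key := h0 (C • x - y)
  simp only [mulVec_sub, mulVec_smul, hTx, sub_dotProduct, dotProduct_sub, smul_dotProduct,
    dotProduct_smul, hxTy, smul_eq_mul] at key
  rw [show y ⬝ᵥ T⁻¹ *ᵥ y = x ⬝ᵥ y from dotProduct_comm _ _]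
  nlinarith [hup y]

lemma Matrix.abs_apply_le_of_dotProduct_mulVec_le [DecidableEq n] (hT : T.IsSymm)
    (h0 : ∀ x, 0 ≤ x ⬝ᵥ T *ᵥ x) (hup : ∀ x, x ⬝ᵥ T *ᵥ x ≤ C * (x ⬝ᵥ x)) (i j : n) :
    |T i j| ≤ C := by
  have hpolar (s : ℝ) :
      (Pi.single i 1 + s • Pi.single j 1) ⬝ᵥ T *ᵥ (Pi.single i 1 + s • Pi.single j 1)
        = T i i + 2 * s * T i j + s ^ 2 * T j j := by
    simp [mulVec_add, mulVec_smul, dotProduct_add, add_dotProduct, hT.apply j i]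
    ring
  have hdiag (k : n) : T k k ≤ C := by simpa using hup (Pi.single k 1)
  have hplus := hpolar 1 ▸ h0 _
  have hminus := hpolar (-1) ▸ h0 _
  rw [abs_le]
  constructor <;> nlinarith [hdiag i, hdiag j]

end QuadraticForm

lemma Matrix.abs_apply_le_sum_abs {m n : Type*} [Fintype m] [Fintype n] (A : Matrix m n ℝ)
    (a : m) (b : n) : |A a b| ≤ ∑ i, ∑ j, |A i j| :=
  (Finset.single_le_sum (f := fun j => |A a j|) (fun _ _ => abs_nonneg _)
    (Finset.mem_univ b)).trans
    (Finset.single_le_sum (f := fun i => ∑ j, |A i j|)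
      (fun _ _ => Finset.sum_nonneg fun _ _ => abs_nonneg _) (Finset.mem_univ a))

lemma abs_prod_sub_prod_le {ι : Type*} [Fintype ι] {a b : ι → ℝ} {M ε : ℝ}
    (ha : ∀ i, |a i| ≤ M) (hb : ∀ i, |b i| ≤ M) (hab : ∀ i, |a i - b i| ≤ ε) :
    |∏ i, a i - ∏ i, b i| ≤ Fintype.card ι * M ^ (Fintype.card ι - 1) * ε := by
  rcases isEmpty_or_nonempty ι with _ | ⟨⟨i⟩⟩
  · simp
  have hM : 0 ≤ M := (abs_nonneg _).trans (ha i)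
  have hε : 0 ≤ ε := (abs_nonneg _).trans (hab i)
  have key := (MultilinearMap.mkPiAlgebra ℝ ι ℝ).norm_image_sub_le_of_bound zero_le_one
    (fun m => by simp) a b
  simp only [MultilinearMap.mkPiAlgebra_apply, Real.norm_eq_abs, one_mul] at key
  refine key.trans ?_
  gcongr
  · exact max_le ((pi_norm_le_iff_of_nonneg hM).2 ha) ((pi_norm_le_iff_of_nonneg hM).2 hb)
  · exact (pi_norm_le_iff_of_nonneg hε).2 hab

theorem Matrix.abs_det_sub_det_le {n : Type*} [Fintype n] [DecidableEq n] {A B : Matrix n n ℝ}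
    {M ε : ℝ} (hA : ∀ i j, |A i j| ≤ M) (hB : ∀ i j, |B i j| ≤ M)
    (hAB : ∀ i j, |A i j - B i j| ≤ ε) :
    |A.det - B.det|
      ≤ (Fintype.card n).factorial * (Fintype.card n * M ^ (Fintype.card n - 1) * ε) := by
  rw [det_apply, det_apply, ← Finset.sum_sub_distrib]
  refine (Finset.abs_sum_le_sum_abs _ _).trans ?_
  calc ∑ σ : Equiv.Perm n,
        |Equiv.Perm.sign σ • ∏ i, A (σ i) i - Equiv.Perm.sign σ • ∏ i, B (σ i) i|
      ≤ ∑ _σ : Equiv.Perm n, Fintype.card n * M ^ (Fintype.card n - 1) * ε := by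
        gcongr with σ
        rw [← smul_sub, Units.smul_def, zsmul_eq_mul, abs_mul, abs_unit_intCast, one_mul]
        exact abs_prod_sub_prod_le (a := fun i => A (σ i) i) (b := fun i => B (σ i) i)
          (fun i => hA _ _) (fun i => hB _ _) (fun i => hAB _ _)
    _ = _ := by simp [Fintype.card_perm]

lemma abs_exp_sub_exp_le (x y : ℝ) : |exp x - exp y| ≤ exp (max x y) * |x - y| := by
  wlog h : y ≤ x generalizing x y
  · rw [abs_sub_comm, max_comm, abs_sub_comm x]
    exact this y x (le_of_not_ge h)
  rw [max_eq_left h, abs_of_nonneg (sub_nonneg.2 (exp_le_exp.2 h)),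
    abs_of_nonneg (sub_nonneg.2 h)]
  have hy : exp y = exp x * exp (-(x - y)) := by rw [← exp_add]; ring_nf
  nlinarith [one_sub_le_exp_neg (x - y), exp_pos x]

lemma abs_mul_sub_mul_le (a₁ a₂ b₁ b₂ : ℝ) :
    |a₁ * b₁ - a₂ * b₂| ≤ |a₁ - a₂| * |b₁| + |a₂| * |b₁ - b₂| := by
  rw [← abs_mul, ← abs_mul]
  exact (abs_add_le _ _).trans_eq' (by ring_nf)

lemma abs_div_sqrt_sub_div_sqrt_le {ρ₁ ρ₂ d₁ d₂ δ ρM : ℝ} (hδ : 0 < δ) (h₁ : δ ≤ d₁)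
    (h₂ : δ ≤ d₂) (hρ₂ : |ρ₂| ≤ ρM) :
    |ρ₁ / √d₁ - ρ₂ / √d₂| ≤ |ρ₁ - ρ₂| / √δ + ρM * |d₁ - d₂| / (2 * δ * √δ) := by
  have hs : 0 < √δ := sqrt_pos.2 hδ
  have ha : √δ ≤ √d₁ := sqrt_le_sqrt h₁
  have hb : √δ ≤ √d₂ := sqrt_le_sqrt h₂
  set a := √d₁
  set b := √d₂
  set s := √δ
  have ha0 : 0 < a := hs.trans_le ha
  have hb0 : 0 < b := hs.trans_le hb
  have hsplit : ρ₁ / a - ρ₂ / b = (ρ₁ - ρ₂) / a + ρ₂ * (b - a) / (a * b) := by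
    field_simp
    ring
  rw [hsplit, (sq_sqrt (hδ.le.trans h₁)).symm, (sq_sqrt (hδ.le.trans h₂)).symm,
    (sq_sqrt hδ.le).symm]
  refine (abs_add_le _ _).trans (add_le_add ?_ ?_)
  · rw [abs_div, abs_of_pos ha0]
    exact div_le_div_of_nonneg_left (abs_nonneg _) hs ha
  · rw [abs_div, abs_mul, abs_of_pos (mul_pos ha0 hb0),
      show a ^ 2 - b ^ 2 = (a - b) * (a + b) by ring, abs_mul, abs_sub_comm b,
      abs_of_pos (add_pos ha0 hb0), div_le_div_iff₀ (mul_pos ha0 hb0) (by positivity)]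
    have hab : 2 * (s ^ 2 * s) ≤ (a + b) * (a * b) := by
      nlinarith [mul_le_mul ha hb hs.le ha0.le]
    calc |ρ₂| * |a - b| * (2 * s ^ 2 * s) ≤ |ρ₂| * |a - b| * ((a + b) * (a * b)) := by
          rw [mul_assoc 2]
          gcongr
      _ ≤ ρM * |a - b| * ((a + b) * (a * b)) := by gcongr
      _ = ρM * (|a - b| * (a + b)) * (a * b) := by ring

lemma one_add_rpow_le_exp_mul {s q : ℝ} (hs : 0 ≤ s) (hq : 0 ≤ q) :
    (1 + s) ^ q ≤ exp (q * s) := by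
  rw [mul_comm, exp_mul]
  exact rpow_le_rpow (by linarith) (by linarith [add_one_le_exp s]) hq

lemma one_add_rpow_mul_sq_mul_exp_le {q u L r s t : ℝ} (hq : 0 ≤ q) (hL : 0 < L) (hr : 0 ≤ r)
    (hs : 0 ≤ s) (hsr : s ≤ r + u) (ht : 0 ≤ t) (htu : t ≤ 2 * u) :
    (1 + s) ^ q * ((1 + r + t) ^ 2 * exp (-(r ^ 2 / (2 * L))))
      ≤ exp ((q + 4) * u + (q + 2) ^ 2 * L / 2) := by
  have hrt : (1 + r + t) ^ 2 ≤ exp (2 * (r + 2 * u)) := by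
    calc (1 + r + t) ^ 2 ≤ exp (r + t) ^ 2 :=
          pow_le_pow_left₀ (by linarith) (by linarith [add_one_le_exp (r + t)]) 2
      _ = exp (2 * (r + t)) := by rw [← exp_nat_mul]; norm_num
      _ ≤ exp (2 * (r + 2 * u)) := by gcongr
  calc (1 + s) ^ q * ((1 + r + t) ^ 2 * exp (-(r ^ 2 / (2 * L))))
      ≤ exp (q * (r + u)) * (exp (2 * (r + 2 * u)) * exp (-(r ^ 2 / (2 * L)))) := by
        gcongr
        exact (one_add_rpow_le_exp_mul hs hq).trans (by gcongr)
    _ = exp ((q + 4) * u + ((q + 2) * r - r ^ 2 / (2 * L))) := by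
        rw [← exp_add, ← exp_add]
        ring_nf
    _ ≤ exp ((q + 4) * u + (q + 2) ^ 2 * L / 2) := by
        gcongr
        rw [sub_le_iff_le_add, div_add_div _ _ two_ne_zero (by positivity),
          le_div_iff₀ (by positivity)]
        nlinarith [sq_nonneg ((q + 2) * L - r)]

lemma enorm3_nonneg (v : V3) : 0 ≤ enorm3 v := Real.sqrt_nonneg _

lemma enorm3_eq_norm (v : V3) :
    enorm3 v = ‖(WithLp.toLp 2 v : EuclideanSpace ℝ (Fin 3))‖ := by
  simp [EuclideanSpace.norm_eq, enorm3]

lemma enorm3_sq (v : V3) : enorm3 v ^ 2 = v ⬝ᵥ v := by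
  rw [enorm3, Real.sq_sqrt (by positivity)]
  simp [dotProduct, sq]

lemma enorm3_sub_le (x y : V3) : enorm3 (x - y) ≤ enorm3 x + enorm3 y := by
  simpa only [enorm3_eq_norm, WithLp.toLp_sub] using norm_sub_le _ _

lemma enorm3_sub_comm (x y : V3) : enorm3 (x - y) = enorm3 (y - x) := by
  simpa only [enorm3_eq_norm, WithLp.toLp_sub] using norm_sub_rev _ _

lemma enorm3_le_sub_add (x y : V3) : enorm3 x ≤ enorm3 (x - y) + enorm3 y := by
  simpa only [enorm3_eq_norm, WithLp.toLp_sub] using norm_le_norm_sub_add _ _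

lemma enorm3_sub_le_min_add (v U₁ U₂ : V3) :
    enorm3 (v - U₁) ≤ min (enorm3 (v - U₁)) (enorm3 (v - U₂)) + enorm3 (U₁ - U₂) := by
  rw [← min_add_add_right]
  refine le_min (le_add_of_nonneg_right (enorm3_nonneg _)) ?_
  simpa [enorm3_sub_comm U₂] using enorm3_le_sub_add (v - U₁) (U₂ - U₁)

lemma abs_apply_le_enorm3 (v : V3) (a : Fin 3) : |v a| ≤ enorm3 v := by
  simpa [enorm3_eq_norm] using
    PiLp.norm_apply_le (WithLp.toLp 2 v : EuclideanSpace ℝ (Fin 3)) a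

lemma abs_dotProduct_le_enorm3 (x y : V3) : |x ⬝ᵥ y| ≤ enorm3 x * enorm3 y := by
  simpa [enorm3_eq_norm, EuclideanSpace.inner_eq_star_dotProduct, dotProduct_comm] using
    abs_real_inner_le_norm (WithLp.toLp 2 x : EuclideanSpace ℝ (Fin 3)) (WithLp.toLp 2 y)

lemma abs_dotProduct_mulVec_le (A : Matrix (Fin 3) (Fin 3) ℝ) (x y : V3) :
    |x ⬝ᵥ A *ᵥ y| ≤ (∑ a, ∑ b, |A a b|) * enorm3 x * enorm3 y := by
  simp only [dotProduct, mulVec, Finset.mul_sum, Finset.sum_mul]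
  refine (Finset.abs_sum_le_sum_abs _ _).trans <| Finset.sum_le_sum fun a _ =>
    (Finset.abs_sum_le_sum_abs _ _).trans <| Finset.sum_le_sum fun b _ => ?_
  calc |x a * (A a b * y b)| = |A a b| * |x a| * |y b| := by rw [abs_mul, abs_mul]; ring
    _ ≤ |A a b| * enorm3 x * enorm3 y :=
      mul_le_mul (mul_le_mul_of_nonneg_left (abs_apply_le_enorm3 x a) (abs_nonneg _))
        (abs_apply_le_enorm3 y b) (abs_nonneg _)
        (mul_nonneg (abs_nonneg _) (enorm3_nonneg x))

lemma quadForm_eq_dotProduct (A : Matrix (Fin 3) (Fin 3) ℝ) (k : V3) :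
    quadForm A k = k ⬝ᵥ A *ᵥ k := by
  simp [quadForm, dotProduct, mulVec, Finset.mul_sum, mul_assoc]

lemma gaussianM_eq (ρ : ℝ) (U : V3) (T : Matrix (Fin 3) (Fin 3) ℝ) (v : V3) :
    gaussianM ρ U T v
      = ρ / √((2 * π) ^ 3 * T.det) * exp (-(1 / 2) * quadForm T⁻¹ (v - U)) :=
  rfl

def IsAdmissibleTensor (lm lM : ℝ) (T : Matrix (Fin 3) (Fin 3) ℝ) : Prop :=
  T.IsSymm ∧ ∀ k : V3, lm * enorm3 k ^ 2 ≤ quadForm T k ∧ quadForm T k ≤ lM * enorm3 k ^ 2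

namespace IsAdmissibleTensor

variable {lm lM : ℝ} {T T₁ T₂ : Matrix (Fin 3) (Fin 3) ℝ}

lemma lower (hT : IsAdmissibleTensor lm lM T) (x : V3) : lm * (x ⬝ᵥ x) ≤ x ⬝ᵥ T *ᵥ x := by
  simpa [enorm3_sq, quadForm_eq_dotProduct] using (hT.2 x).1

lemma upper (hT : IsAdmissibleTensor lm lM T) (x : V3) : x ⬝ᵥ T *ᵥ x ≤ lM * (x ⬝ᵥ x) := by
  simpa [enorm3_sq, quadForm_eq_dotProduct] using (hT.2 x).2

lemma nonneg (hT : IsAdmissibleTensor lm lM T) (hlm : 0 ≤ lm) (x : V3) :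
    0 ≤ x ⬝ᵥ T *ᵥ x :=
  (mul_nonneg hlm (dotProduct_self_star_nonneg x)).trans (hT.lower x)

lemma pow_three_le_det (hT : IsAdmissibleTensor lm lM T) (hlm : 0 ≤ lm) : lm ^ 3 ≤ T.det := by
  simpa using (isHermitian_iff_isSymm.2 hT.1).pow_card_le_det hlm hT.lower

lemma isUnit_det (hT : IsAdmissibleTensor lm lM T) (hlm : 0 < lm) : IsUnit T.det :=
  (pow_pos hlm 3).trans_le (hT.pow_three_le_det hlm.le) |>.ne' |>.isUnit

lemma abs_apply_le (hT : IsAdmissibleTensor lm lM T) (hlm : 0 ≤ lm) (a b : Fin 3) :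
    |T a b| ≤ lM :=
  abs_apply_le_of_dotProduct_mulVec_le hT.1 (hT.nonneg hlm) hT.upper a b

lemma enorm3_inv_mulVec_le (hT : IsAdmissibleTensor lm lM T) (hlm : 0 < lm) (y : V3) :
    enorm3 (T⁻¹ *ᵥ y) ≤ enorm3 y / lm := by
  have h := sq_mul_dotProduct_le_mulVec_dotProduct_mulVec hlm.le hT.lower (T⁻¹ *ᵥ y)
  rw [mulVec_mulVec, mul_nonsing_inv _ (hT.isUnit_det hlm), one_mulVec, ← enorm3_sq,
    ← enorm3_sq, ← mul_pow] at h
  rw [le_div_iff₀' hlm]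
  exact le_of_sq_le_sq h (enorm3_nonneg y)

lemma enorm3_sq_le_mul_quadForm_inv (hT : IsAdmissibleTensor lm lM T) (hlm : 0 < lm)
    (hlM : 0 < lM) (y : V3) : enorm3 y ^ 2 ≤ lM * quadForm T⁻¹ y := by
  rw [enorm3_sq, quadForm_eq_dotProduct]
  exact dotProduct_le_mul_dotProduct_inv_mulVec hT.1 (hT.isUnit_det hlm) (hT.nonneg hlm.le)
    hT.upper hlM y

lemma neg_half_mul_quadForm_inv_le (hT : IsAdmissibleTensor lm lM T) (hlm : 0 < lm)
    (hlM : 0 < lM) {r : ℝ} {w : V3} (hr : 0 ≤ r) (hrw : r ≤ enorm3 w) :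
    -(1 / 2) * quadForm T⁻¹ w ≤ -(r ^ 2 / (2 * lM)) := by
  have h := (pow_le_pow_left₀ hr hrw 2).trans (hT.enorm3_sq_le_mul_quadForm_inv hlm hlM w)
  rw [← div_le_iff₀' hlM] at h
  rw [div_mul_eq_div_div_swap]
  linarith

lemma abs_det_sub_det_le (h₁ : IsAdmissibleTensor lm lM T₁) (h₂ : IsAdmissibleTensor lm lM T₂)
    (hlm : 0 ≤ lm) : |T₁.det - T₂.det| ≤ 18 * lM ^ 2 * ∑ a, ∑ b, |T₁ a b - T₂ a b| := by
  have h := Matrix.abs_det_sub_det_le (h₁.abs_apply_le hlm) (h₂.abs_apply_le hlm)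
    (abs_apply_le_sum_abs (T₁ - T₂))
  simp only [Fintype.card_fin, Matrix.sub_apply] at h
  norm_num at h
  linarith

lemma abs_quadForm_inv_sub_le (h₁ : IsAdmissibleTensor lm lM T₁)
    (h₂ : IsAdmissibleTensor lm lM T₂) (hlm : 0 < lm) (w₁ w₂ : V3) :
    |quadForm T₁⁻¹ w₁ - quadForm T₂⁻¹ w₂|
      ≤ (enorm3 w₁ + enorm3 w₂) * enorm3 (w₁ - w₂) / lm
        + (∑ a, ∑ b, |T₁ a b - T₂ a b|) * enorm3 w₂ ^ 2 / lm ^ 2 := by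
  have hsplit : quadForm T₁⁻¹ w₁ - quadForm T₂⁻¹ w₂
      = (w₁ - w₂) ⬝ᵥ T₁⁻¹ *ᵥ w₁ + w₂ ⬝ᵥ T₁⁻¹ *ᵥ (w₁ - w₂)
        + (T₁⁻¹ *ᵥ w₂) ⬝ᵥ (T₂ - T₁) *ᵥ (T₂⁻¹ *ᵥ w₂) := by
    have hunit : IsUnit T₁ ↔ IsUnit T₂ := iff_of_true
      ((isUnit_iff_isUnit_det _).2 (h₁.isUnit_det hlm))
      ((isUnit_iff_isUnit_det _).2 (h₂.isUnit_det hlm))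
    have h₃ : (T₁⁻¹ *ᵥ w₂) ⬝ᵥ (T₂ - T₁) *ᵥ (T₂⁻¹ *ᵥ w₂) = w₂ ⬝ᵥ (T₁⁻¹ - T₂⁻¹) *ᵥ w₂ := by
      rw [inv_sub_inv hunit, ← mulVec_mulVec, ← mulVec_mulVec, dotProduct_mulVec w₂ T₁⁻¹,
        ← mulVec_transpose, h₁.1.inv.eq]
    rw [h₃, quadForm_eq_dotProduct, quadForm_eq_dotProduct]
    simp only [sub_dotProduct, dotProduct_sub, mulVec_sub, sub_mulVec]
    ring
  set S := ∑ a, ∑ b, |T₁ a b - T₂ a b|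
  have hS : ∑ a, ∑ b, |(T₂ - T₁) a b| = S := by
    simp only [Matrix.sub_apply, abs_sub_comm, S]
  have hS0 : 0 ≤ S := Finset.sum_nonneg fun _ _ => Finset.sum_nonneg fun _ _ => abs_nonneg _
  have e₁ : |(w₁ - w₂) ⬝ᵥ T₁⁻¹ *ᵥ w₁| ≤ enorm3 (w₁ - w₂) * (enorm3 w₁ / lm) :=
    (abs_dotProduct_le_enorm3 _ _).trans
      (mul_le_mul_of_nonneg_left (h₁.enorm3_inv_mulVec_le hlm _) (enorm3_nonneg _))
  have e₂ : |w₂ ⬝ᵥ T₁⁻¹ *ᵥ (w₁ - w₂)| ≤ enorm3 w₂ * (enorm3 (w₁ - w₂) / lm) :=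
    (abs_dotProduct_le_enorm3 _ _).trans
      (mul_le_mul_of_nonneg_left (h₁.enorm3_inv_mulVec_le hlm _) (enorm3_nonneg _))
  have e₃ : |(T₁⁻¹ *ᵥ w₂) ⬝ᵥ (T₂ - T₁) *ᵥ (T₂⁻¹ *ᵥ w₂)|
      ≤ S * (enorm3 w₂ / lm) * (enorm3 w₂ / lm) := by
    refine (abs_dotProduct_mulVec_le _ _ _).trans ?_
    rw [hS]
    exact mul_le_mul (mul_le_mul_of_nonneg_left (h₁.enorm3_inv_mulVec_le hlm _) hS0)
      (h₂.enorm3_inv_mulVec_le hlm _) (enorm3_nonneg _)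
      (mul_nonneg hS0 (div_nonneg (enorm3_nonneg _) hlm.le))
  rw [hsplit]
  calc _ ≤ _ := abs_add_three _ _ _
    _ ≤ _ := add_le_add (add_le_add e₁ e₂) e₃
    _ = _ := by ring

lemma abs_exp_neg_half_quadForm_inv_sub_le (h₁ : IsAdmissibleTensor lm lM T₁)
    (h₂ : IsAdmissibleTensor lm lM T₂) (hlm : 0 < lm) (hlM : 0 < lM) (v U₁ U₂ : V3) :
    |exp (-(1 / 2) * quadForm T₁⁻¹ (v - U₁)) - exp (-(1 / 2) * quadForm T₂⁻¹ (v - U₂))|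
      ≤ exp (-(min (enorm3 (v - U₁)) (enorm3 (v - U₂)) ^ 2 / (2 * lM)))
        * ((1 + min (enorm3 (v - U₁)) (enorm3 (v - U₂)) + enorm3 (U₁ - U₂)) ^ 2
          * (enorm3 (U₁ - U₂) / lm + (∑ a, ∑ b, |T₁ a b - T₂ a b|) / (2 * lm ^ 2))) := by
  set r := min (enorm3 (v - U₁)) (enorm3 (v - U₂))
  set ΔU := enorm3 (U₁ - U₂)
  set S := ∑ a, ∑ b, |T₁ a b - T₂ a b|
  set R := 1 + r + ΔU
  have hr : 0 ≤ r := le_min (enorm3_nonneg _) (enorm3_nonneg _)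
  have hΔU : 0 ≤ ΔU := enorm3_nonneg _
  have hRR : R ≤ R ^ 2 := by nlinarith
  have hw₁ : enorm3 (v - U₁) ≤ R := by linarith [enorm3_sub_le_min_add v U₁ U₂]
  have hw₂ : enorm3 (v - U₂) ≤ R := by
    have h := enorm3_sub_le_min_add v U₂ U₁
    rw [min_comm, enorm3_sub_comm U₂] at h
    linarith
  have hQ := h₁.abs_quadForm_inv_sub_le h₂ hlm (v - U₁) (v - U₂)
  rw [sub_sub_sub_cancel_left, enorm3_sub_comm U₂] at hQ
  refine (abs_exp_sub_exp_le _ _).trans ?_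
  rw [← mul_sub, abs_mul, abs_neg, abs_of_pos one_half_pos]
  refine mul_le_mul (exp_le_exp.2 (max_le (h₁.neg_half_mul_quadForm_inv_le hlm hlM hr
    (min_le_left _ _)) (h₂.neg_half_mul_quadForm_inv_le hlm hlM hr (min_le_right _ _))))
    ?_ (by positivity) (exp_pos _).le
  calc 1 / 2 * |quadForm T₁⁻¹ (v - U₁) - quadForm T₂⁻¹ (v - U₂)|
      ≤ 1 / 2 * ((R + R) * ΔU / lm + S * R ^ 2 / lm ^ 2) := by
        refine mul_le_mul_of_nonneg_left (hQ.trans ?_) (by norm_num)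
        have hS : 0 ≤ S := Finset.sum_nonneg fun _ _ => Finset.sum_nonneg fun _ _ => abs_nonneg _
        gcongr
        exact enorm3_nonneg _
    _ = R * (ΔU / lm) + R ^ 2 * (S / (2 * lm ^ 2)) := by ring
    _ ≤ R ^ 2 * (ΔU / lm) + R ^ 2 * (S / (2 * lm ^ 2)) := by gcongr
    _ = R ^ 2 * (ΔU / lm + S / (2 * lm ^ 2)) := by ring

end IsAdmissibleTensor

lemma exists_abs_div_sqrt_det_sub_le {ρM lm lM : ℝ} (hρM : 0 ≤ ρM) (hlm : 0 < lm) :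
    ∃ A > 0, ∀ (ρ₁ ρ₂ : ℝ) (T₁ T₂ : Matrix (Fin 3) (Fin 3) ℝ), |ρ₂| ≤ ρM →
      IsAdmissibleTensor lm lM T₁ → IsAdmissibleTensor lm lM T₂ →
      |ρ₁ / √((2 * π) ^ 3 * T₁.det) - ρ₂ / √((2 * π) ^ 3 * T₂.det)|
        ≤ A * (|ρ₁ - ρ₂| + ∑ a, ∑ b, |T₁ a b - T₂ a b|) := by
  set δ := (2 * π) ^ 3 * lm ^ 3
  have hδ : 0 < δ := by positivity
  set c := ρM * ((2 * π) ^ 3 * 18 * lM ^ 2) / (2 * δ * √δ)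
  have hc : 0 ≤ c := by positivity
  refine ⟨1 / √δ + c, by positivity, fun ρ₁ ρ₂ T₁ T₂ hρ₂ h₁ h₂ => ?_⟩
  have hS : 0 ≤ ∑ a, ∑ b, |T₁ a b - T₂ a b| :=
    Finset.sum_nonneg fun _ _ => Finset.sum_nonneg fun _ _ => abs_nonneg _
  have hdet {T} (hT : IsAdmissibleTensor lm lM T) : δ ≤ (2 * π) ^ 3 * T.det :=
    mul_le_mul_of_nonneg_left (hT.pow_three_le_det hlm.le) (by positivity)
  refine (abs_div_sqrt_sub_div_sqrt_le hδ (hdet h₁) (hdet h₂) hρ₂).trans ?_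
  rw [← mul_sub, abs_mul, abs_of_pos (by positivity : (0 : ℝ) < (2 * π) ^ 3)]
  calc |ρ₁ - ρ₂| / √δ + ρM * ((2 * π) ^ 3 * |T₁.det - T₂.det|) / (2 * δ * √δ)
      ≤ |ρ₁ - ρ₂| / √δ
          + ρM * ((2 * π) ^ 3 * (18 * lM ^ 2 * ∑ a, ∑ b, |T₁ a b - T₂ a b|)) / (2 * δ * √δ) := by
        gcongr
        exact h₁.abs_det_sub_det_le h₂ hlm.le
    _ = 1 / √δ * |ρ₁ - ρ₂| + c * ∑ a, ∑ b, |T₁ a b - T₂ a b| := by ring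
    _ ≤ _ := by
        nlinarith [mul_nonneg (by positivity : (0 : ℝ) ≤ 1 / √δ) hS,
          mul_nonneg hc (abs_nonneg (ρ₁ - ρ₂))]

lemma exists_abs_gaussianM_sub_le {ρM lm lM : ℝ} (hρM : 0 ≤ ρM) (hlm : 0 < lm)
    (hlM : 0 < lM) :
    ∃ K > 0, ∀ (ρ₁ ρ₂ : ℝ) (U₁ U₂ : V3) (T₁ T₂ : Matrix (Fin 3) (Fin 3) ℝ) (v : V3),
      |ρ₂| ≤ ρM → IsAdmissibleTensor lm lM T₁ → IsAdmissibleTensor lm lM T₂ →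
      |gaussianM ρ₁ U₁ T₁ v - gaussianM ρ₂ U₂ T₂ v|
        ≤ K * (1 + min (enorm3 (v - U₁)) (enorm3 (v - U₂)) + enorm3 (U₁ - U₂)) ^ 2
          * exp (-(min (enorm3 (v - U₁)) (enorm3 (v - U₂)) ^ 2 / (2 * lM)))
          * (|ρ₁ - ρ₂| + enorm3 (U₁ - U₂) + ∑ a, ∑ b, |T₁ a b - T₂ a b|) := by
  obtain ⟨A, hA, hnorm⟩ := exists_abs_div_sqrt_det_sub_le (lM := lM) hρM hlm
  set δ := (2 * π) ^ 3 * lm ^ 3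
  have hδ : 0 < δ := by positivity
  set B := ρM / √δ * (1 / lm + 1 / (2 * lm ^ 2))
  refine ⟨A + B, by positivity, fun ρ₁ ρ₂ U₁ U₂ T₁ T₂ v hρ₂ h₁ h₂ => ?_⟩
  set r := min (enorm3 (v - U₁)) (enorm3 (v - U₂))
  set ΔU := enorm3 (U₁ - U₂)
  set S := ∑ a, ∑ b, |T₁ a b - T₂ a b|
  set R := 1 + r + ΔU
  set G := exp (-(r ^ 2 / (2 * lM)))
  have hr : 0 ≤ r := le_min (enorm3_nonneg _) (enorm3_nonneg _)
  have hΔU : 0 ≤ ΔU := enorm3_nonneg _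
  have hS : 0 ≤ S := Finset.sum_nonneg fun _ _ => Finset.sum_nonneg fun _ _ => abs_nonneg _
  have hX : 0 ≤ |ρ₁ - ρ₂| := abs_nonneg _
  have hR : 1 ≤ R := by linarith
  have hcoef : |ρ₂ / √((2 * π) ^ 3 * T₂.det)| ≤ ρM / √δ := by
    have hdet : δ ≤ (2 * π) ^ 3 * T₂.det :=
      mul_le_mul_of_nonneg_left (h₂.pow_three_le_det hlm.le) (by positivity)
    rw [abs_div, abs_of_pos (sqrt_pos.2 (hδ.trans_le hdet))]
    exact div_le_div₀ hρM hρ₂ (sqrt_pos.2 hδ) (sqrt_le_sqrt hdet)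
  have hE₁ : exp (-(1 / 2) * quadForm T₁⁻¹ (v - U₁)) ≤ G :=
    exp_le_exp.2 (h₁.neg_half_mul_quadForm_inv_le hlm hlM hr (min_le_left _ _))
  rw [gaussianM_eq, gaussianM_eq]
  refine (abs_mul_sub_mul_le _ _ _ _).trans ?_
  rw [abs_of_pos (exp_pos _)]
  calc _ ≤ A * (|ρ₁ - ρ₂| + S) * G
          + ρM / √δ * (G * (R ^ 2 * (ΔU / lm + S / (2 * lm ^ 2)))) :=
        add_le_add (mul_le_mul (hnorm ρ₁ ρ₂ T₁ T₂ hρ₂ h₁ h₂) hE₁ (exp_pos _).le (by positivity))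
          (mul_le_mul hcoef (h₁.abs_exp_neg_half_quadForm_inv_sub_le h₂ hlm hlM v U₁ U₂)
            (abs_nonneg _) (by positivity))
    _ = G * (A * (|ρ₁ - ρ₂| + S) + ρM / √δ * R ^ 2 * (ΔU / lm + S / (2 * lm ^ 2))) := by ring
    _ ≤ G * (A * (R ^ 2 * (|ρ₁ - ρ₂| + ΔU + S))
          + ρM / √δ * R ^ 2 * ((1 / lm + 1 / (2 * lm ^ 2)) * (|ρ₁ - ρ₂| + ΔU + S))) := by
        gcongr
        · exact (by linarith : |ρ₁ - ρ₂| + S ≤ _).trans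
            (le_mul_of_one_le_left (by positivity) (one_le_pow₀ hR))
        · rw [add_mul, one_div_mul_eq_div, one_div_mul_eq_div]
          gcongr <;> linarith
    _ = (A + B) * R ^ 2 * G * (|ρ₁ - ρ₂| + ΔU + S) := by ring

theorem gaussian_lipschitz_in_parameters_general (q ρm ρM uM lm lM : ℝ) (hq : 0 ≤ q)
    (hρm : 0 < ρm) (hρ : ρm ≤ ρM) (hlm : 0 < lm) (hl : lm ≤ lM) :
    ∃ C > 0, ∀ (ρ₁ ρ₂ : ℝ) (U₁ U₂ : V3) (𝒯₁ 𝒯₂ : Matrix (Fin 3) (Fin 3) ℝ),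
      ρ₁ ∈ Set.Icc ρm ρM → ρ₂ ∈ Set.Icc ρm ρM →
      enorm3 U₁ ≤ uM → enorm3 U₂ ≤ uM →
      𝒯₁.IsSymm → 𝒯₂.IsSymm →
      (∀ k : V3, lm * enorm3 k ^ 2 ≤ quadForm 𝒯₁ k ∧ quadForm 𝒯₁ k ≤ lM * enorm3 k ^ 2) →
      (∀ k : V3, lm * enorm3 k ^ 2 ≤ quadForm 𝒯₂ k ∧ quadForm 𝒯₂ k ≤ lM * enorm3 k ^ 2) →
      ∀ v : V3,
        (1 + enorm3 v) ^ q * |gaussianM ρ₁ U₁ 𝒯₁ v - gaussianM ρ₂ U₂ 𝒯₂ v|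
          ≤ C * (|ρ₁ - ρ₂| + enorm3 (fun a => U₁ a - U₂ a)
              + ∑ a, ∑ b, |𝒯₁ a b - 𝒯₂ a b|) := by
  have hlM : 0 < lM := hlm.trans_le hl
  obtain ⟨K, hK, hM⟩ := exists_abs_gaussianM_sub_le (hρm.le.trans hρ) hlm hlM
  refine ⟨K * exp ((q + 4) * uM + (q + 2) ^ 2 * lM / 2), by positivity, ?_⟩
  intro ρ₁ ρ₂ U₁ U₂ 𝒯₁ 𝒯₂ _ hρ₂ hU₁ hU₂ hs₁ hs₂ hq₁ hq₂ v
  set r := min (enorm3 (v - U₁)) (enorm3 (v - U₂))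
  have hv : enorm3 v ≤ r + uM := by
    rw [← min_add_add_right]
    exact le_min ((enorm3_le_sub_add v U₁).trans (by gcongr))
      ((enorm3_le_sub_add v U₂).trans (by gcongr))
  have hweight := one_add_rpow_mul_sq_mul_exp_le hq hlM (le_min (enorm3_nonneg _)
    (enorm3_nonneg _)) (enorm3_nonneg v) hv (enorm3_nonneg (U₁ - U₂))
    ((enorm3_sub_le U₁ U₂).trans (by linarith))
  have hM' := hM ρ₁ ρ₂ U₁ U₂ 𝒯₁ 𝒯₂ v (abs_le.2 ⟨by linarith [hρ₂.1], hρ₂.2⟩)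
    ⟨hs₁, hq₁⟩ ⟨hs₂, hq₂⟩
  set Δ := |ρ₁ - ρ₂| + enorm3 (U₁ - U₂) + ∑ a, ∑ b, |𝒯₁ a b - 𝒯₂ a b|
  have hΔ : 0 ≤ Δ := add_nonneg (add_nonneg (abs_nonneg _) (enorm3_nonneg _))
    (Finset.sum_nonneg fun _ _ => Finset.sum_nonneg fun _ _ => abs_nonneg _)
  calc (1 + enorm3 v) ^ q * |gaussianM ρ₁ U₁ 𝒯₁ v - gaussianM ρ₂ U₂ 𝒯₂ v|
      ≤ K * ((1 + enorm3 v) ^ q * ((1 + r + enorm3 (U₁ - U₂)) ^ 2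
          * exp (-(r ^ 2 / (2 * lM))))) * Δ :=
        (mul_le_mul_of_nonneg_left hM' (rpow_nonneg (by linarith [enorm3_nonneg v]) q)).trans_eq
          (by ring)
    _ ≤ _ := mul_le_mul_of_nonneg_right (mul_le_mul_of_nonneg_left hweight hK.le) hΔ

/-- Lipschitz continuity of the ellipsoidal Gaussian with respect to its
macroscopic parameters, uniformly in the weighted `L∞_q` norm. -/
theorem gaussian_lipschitz_in_parameters (q ρm ρM uM lm lM : ℝ) (hq : 0 ≤ q)
    (hρm : 0 < ρm) (hρ : ρm ≤ ρM) (huM : 0 ≤ uM) (hlm : 0 < lm) (hl : lm ≤ lM) :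
    ∃ C > 0, ∀ (ρ₁ ρ₂ : ℝ) (U₁ U₂ : V3) (𝒯₁ 𝒯₂ : Matrix (Fin 3) (Fin 3) ℝ),
      ρ₁ ∈ Set.Icc ρm ρM → ρ₂ ∈ Set.Icc ρm ρM →
      enorm3 U₁ ≤ uM → enorm3 U₂ ≤ uM →
      𝒯₁.IsSymm → 𝒯₂.IsSymm →
      (∀ k : V3, lm * enorm3 k ^ 2 ≤ quadForm 𝒯₁ k ∧ quadForm 𝒯₁ k ≤ lM * enorm3 k ^ 2) →
      (∀ k : V3, lm * enorm3 k ^ 2 ≤ quadForm 𝒯₂ k ∧ quadForm 𝒯₂ k ≤ lM * enorm3 k ^ 2) →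
      ∀ v : V3,
        (1 + enorm3 v) ^ q * |gaussianM ρ₁ U₁ 𝒯₁ v - gaussianM ρ₂ U₂ 𝒯₂ v|
          ≤ C * (|ρ₁ - ρ₂| + enorm3 (fun a => U₁ a - U₂ a)
              + ∑ a, ∑ b, |𝒯₁ a b - 𝒯₂ a b|) :=
  gaussian_lipschitz_in_parameters_general q ρm ρM uM lm lM hq hρm hρ hlm hl

end
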